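/- Let (w^{(a)}_m) be a solution of the level-k restricted Q-system of type D_r with w^{(a)}_m ≠ 0 for all a ∈ I and 0 ≤ m ≤ k, and let (Q^{(a)}_m) be a solution of the unrestricted Q-system of type D_r. If w^{(a)}_1 = Q^{(a)}_1 for every a ∈ I, then w^{(a)}_m = Q^{(a)}_m for every a ∈ I and 0 ≤ m ≤ k. In particular, Q^{(a)}_k = 1 for every a ∈ I. -/
import Mathlib


/-- The adjacency matrix of the Dynkin diagram `D_r` on the index set `{1, …, r}`:
`A a b = 1` iff (`|a - b| = 1` and `a, b ≤ r - 1`) or `{a, b} = {r - 2, r}`. -/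
def adjD (r a b : ℕ) : ℕ :=
  if ((a + 1 = b ∨ b + 1 = a) ∧ a ≤ r - 1 ∧ b ≤ r - 1)
      ∨ (a = r - 2 ∧ b = r) ∨ (a = r ∧ b = r - 2) then 1 else 0

/-- `Q : ℕ → ℕ → ℂ` is a solution of the unrestricted `Q`-system of type `D_r`:
`Q a 0 = 1` and `(Q a m)^2 = ∏_b (Q b m)^(A a b) + Q a (m-1) * Q a (m+1)`
for all `a ∈ {1, …, r}` and `m ≥ 1`. -/
def IsUnresQSysD (r : ℕ) (Q : ℕ → ℕ → ℂ) : Prop :=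
  (∀ a ∈ Finset.Icc 1 r, Q a 0 = 1) ∧
  ∀ a ∈ Finset.Icc 1 r, ∀ m : ℕ, 1 ≤ m →
    (Q a m) ^ 2 = (∏ b ∈ Finset.Icc 1 r, (Q b m) ^ adjD r a b) + Q a (m - 1) * Q a (m + 1)

/-- `Q` is a solution of the level-`k` restricted `Q`-system of type `D_r`:
`Q a 0 = 1`, `Q a k = 1`, and the `Q`-system recurrence holds for `1 ≤ m ≤ k - 1`. -/
def IsResQSysD (r k : ℕ) (Q : ℕ → ℕ → ℂ) : Prop :=
  (∀ a ∈ Finset.Icc 1 r, Q a 0 = 1) ∧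
  (∀ a ∈ Finset.Icc 1 r, Q a k = 1) ∧
  ∀ a ∈ Finset.Icc 1 r, ∀ m : ℕ, 1 ≤ m → m ≤ k - 1 →
    (Q a m) ^ 2 = (∏ b ∈ Finset.Icc 1 r, (Q b m) ^ adjD r a b) + Q a (m - 1) * Q a (m + 1)

/-- If `w` is a nowhere-vanishing solution of the level-`k` restricted `Q`-system of
type `D_r` and `Q` is a solution of the unrestricted `Q`-system with `w a 1 = Q a 1`
for all `a ∈ I`, then `w a m = Q a m` for all `a ∈ I`, `0 ≤ m ≤ k`; in particular
`Q a k = 1`. -/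
theorem stmt11 (r k : ℕ) (hr : 4 ≤ r) (hk : 1 ≤ k)
    (w Q : ℕ → ℕ → ℂ)
    (hw : IsResQSysD r k w)
    (hwne : ∀ a ∈ Finset.Icc 1 r, ∀ m ≤ k, w a m ≠ 0)
    (hQ : IsUnresQSysD r Q)
    (h1 : ∀ a ∈ Finset.Icc 1 r, w a 1 = Q a 1) :
    (∀ a ∈ Finset.Icc 1 r, ∀ m ≤ k, w a m = Q a m) ∧
    (∀ a ∈ Finset.Icc 1 r, Q a k = 1) := by
  have key : ∀ m, m ≤ k → ∀ a ∈ Finset.Icc 1 r, w a m = Q a m := by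
    intro m
    induction m using Nat.strong_induction_on with
    | _ m ih =>
      match m with
      | 0 => intro _ a ha; rw [hw.1 a ha, hQ.1 a ha]
      | 1 => intro _ a ha; exact h1 a ha
      | (n+2) =>
        intro hm a ha
        have ihn : ∀ a ∈ Finset.Icc 1 r, w a n = Q a n :=
          ih n (by omega) (by omega)
        have ihn1 : ∀ a ∈ Finset.Icc 1 r, w a (n+1) = Q a (n+1) :=
          ih (n+1) (by omega) (by omega)
        have hwrec := hw.2.2 a ha (n+1) (by omega) (by omega)
        have hQrec := hQ.2 a ha (n+1) (by omega)
        have hprod : (∏ b ∈ Finset.Icc 1 r, (w b (n+1)) ^ adjD r a b)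
            = ∏ b ∈ Finset.Icc 1 r, (Q b (n+1)) ^ adjD r a b :=
          Finset.prod_congr rfl (fun b hb => by rw [ihn1 b hb])
        have hne : w a n ≠ 0 := hwne a ha n (by omega)
        have : w a n * w a (n+2) = w a n * Q a (n+2) := by
          have e1 : w a n * w a (n+2)
              = (w a (n+1))^2 - ∏ b ∈ Finset.Icc 1 r, (w b (n+1)) ^ adjD r a b := by
            simp only [Nat.add_sub_cancel] at hwrec; rw [hwrec]; ring
          have e2 : Q a n * Q a (n+2)
              = (Q a (n+1))^2 - ∏ b ∈ Finset.Icc 1 r, (Q b (n+1)) ^ adjD r a b := by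
            simp only [Nat.add_sub_cancel] at hQrec; rw [hQrec]; ring
          rw [e1, hprod, ihn1 a ha, ← e2, ihn a ha]
        exact mul_left_cancel₀ hne this
  refine ⟨fun a ha m hm => key m hm a ha, fun a ha => ?_⟩
  rw [← key k le_rfl a ha]
  exact hw.2.1 a ha
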